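/- Let k be a field, M a finite-dimensional k-vector space, and R ∈ End_k(M⊗M) a solution of the Hopf equation (R¹²R²³ = R²³R¹³R¹²). Then there exist a k-bialgebra B, a left B-module structure on M extending the k-vector space structure (with k-linear B-action), and a right B-comodule structure ρ : M → M⊗B (k-linear, coassociative and counital, written ρ(m) = Σ m₍₀₎⊗m₍₁₎), such that the Hopf module compatibility ρ(b·m) = Σ b₍₁₎·m₍₀₎ ⊗ b₍₂₎m₍₁₎ holds for all b ∈ B, m ∈ M, and R(m⊗n) = Σ n₍₁₎·m ⊗ n₍₀₎ for all m, n ∈ M. -/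

import Mathlib

open TensorProduct LinearMap

section HopfEq

variable (k V : Type*) [Field k] [AddCommGroup V] [Module k V]

/-- The flip map `τ : V ⊗ V → V ⊗ V`, `τ(v ⊗ w) = w ⊗ v`. -/
noncomputable def flipMap : V ⊗[k] V →ₗ[k] V ⊗[k] V :=
  (TensorProduct.comm k V V).toLinearMap

variable {k V}

/-- `R¹² = R ⊗ I` as an endomorphism of `V ⊗ V ⊗ V`. -/
noncomputable def map12 (R : V ⊗[k] V →ₗ[k] V ⊗[k] V) :
    V ⊗[k] (V ⊗[k] V) →ₗ[k] V ⊗[k] (V ⊗[k] V) :=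
  (TensorProduct.assoc k V V V).toLinearMap ∘ₗ R.rTensor V ∘ₗ
    (TensorProduct.assoc k V V V).symm.toLinearMap

/-- `R²³ = I ⊗ R` as an endomorphism of `V ⊗ V ⊗ V`. -/
noncomputable def map23 (R : V ⊗[k] V →ₗ[k] V ⊗[k] V) :
    V ⊗[k] (V ⊗[k] V) →ₗ[k] V ⊗[k] (V ⊗[k] V) :=
  R.lTensor V

/-- `R¹³ = (I ⊗ τ)(R ⊗ I)(I ⊗ τ)` as an endomorphism of `V ⊗ V ⊗ V`. -/
noncomputable def map13 (R : V ⊗[k] V →ₗ[k] V ⊗[k] V) :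
    V ⊗[k] (V ⊗[k] V) →ₗ[k] V ⊗[k] (V ⊗[k] V) :=
  (flipMap k V).lTensor V ∘ₗ map12 R ∘ₗ (flipMap k V).lTensor V

/-- `R` is a solution of the Hopf equation: `R¹²R²³ = R²³R¹³R¹²`. -/
def IsHopfSolution (R : V ⊗[k] V →ₗ[k] V ⊗[k] V) : Prop :=
  map12 R ∘ₗ map23 R = map23 R ∘ₗ map13 R ∘ₗ map12 R

/-- `R` is a solution of the pentagonal equation: `R¹²R¹³R²³ = R²³R¹²`. -/
def IsPentagonSolution (R : V ⊗[k] V →ₗ[k] V ⊗[k] V) : Prop :=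
  map12 R ∘ₗ map13 R ∘ₗ map23 R = map23 R ∘ₗ map12 R

end HopfEq

universe u v

/-- A bialgebra `B` together with a left `B`-module structure and a right `B`-comodule
structure on `M` making `M` a left-right `B`-Hopf module. -/
structure HopfModuleData (k : Type u) [Field k] (M : Type v) [AddCommGroup M] [Module k M] where
  /-- the underlying bialgebra -/
  B : Type (max u v)
  [ringB : Ring B]
  [bialgB : Bialgebra k B]
  /-- the left `B`-action on `M` -/
  act : B ⊗[k] M →ₗ[k] M
  /-- the right `B`-coaction on `M`, `ρ(m) = Σ m₍₀₎ ⊗ m₍₁₎` -/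
  coact : M →ₗ[k] M ⊗[k] B
  act_one : ∀ m : M, act ((1 : B) ⊗ₜ[k] m) = m
  act_mul : ∀ (a b : B) (m : M), act ((a * b) ⊗ₜ[k] m) = act (a ⊗ₜ[k] act (b ⊗ₜ[k] m))
  coassoc : (TensorProduct.assoc k M B B).toLinearMap ∘ₗ coact.rTensor B ∘ₗ coact
      = (Coalgebra.comul (R := k)).lTensor M ∘ₗ coact
  counit : (TensorProduct.rid k M).toLinearMap ∘ₗ
      (Coalgebra.counit (R := k)).lTensor M ∘ₗ coact = LinearMap.id
  /-- the Hopf module compatibility `ρ(b·m) = Σ b₍₁₎·m₍₀₎ ⊗ b₍₂₎m₍₁₎` -/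
  compat : coact ∘ₗ act = TensorProduct.map act (LinearMap.mul' k B) ∘ₗ
      (TensorProduct.tensorTensorTensorComm k B B M B).toLinearMap ∘ₗ
      TensorProduct.map (Coalgebra.comul (R := k)) coact

/-- The map `R(m ⊗ n) = Σ n₍₁₎·m ⊗ n₍₀₎` attached to a Hopf module structure. -/
noncomputable def HopfModuleData.Rmap {k : Type u} [Field k] {M : Type v} [AddCommGroup M]
    [Module k M] (D : HopfModuleData k M) : M ⊗[k] M →ₗ[k] M ⊗[k] M :=
  letI := D.ringB
  letI := D.bialgB
  D.act.rTensor M ∘ₗ ((TensorProduct.comm k M D.B).toLinearMap.rTensor M) ∘ₗ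
    (TensorProduct.assoc k M D.B M).symm.toLinearMap ∘ₗ
    ((TensorProduct.comm k M D.B).toLinearMap.lTensor M) ∘ₗ D.coact.lTensor M

set_option maxHeartbeats 1000000
set_option synthInstance.maxHeartbeats 200000

namespace FRTaux
variable {k : Type u} [Field k] {M : Type v} [AddCommGroup M] [Module k M]
variable {d : ℕ} (b : Module.Basis (Fin d) k M) (R : M ⊗[k] M →ₗ[k] M ⊗[k] M)

/-- contraction of second factor against coordinate `i` -/
noncomputable def contr (i : Fin d) : M ⊗[k] M →ₗ[k] M :=
  (TensorProduct.rid k M).toLinearMap ∘ₗ LinearMap.lTensor M (b.coord i)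

@[simp] lemma contr_tmul (i : Fin d) (u y : M) :
    contr b i (u ⊗ₜ[k] y) = b.coord i y • u := by
  simp [contr, TensorProduct.smul_tmul']

lemma expand (t : M ⊗[k] M) : ∑ i, contr b i t ⊗ₜ[k] b i = t := by
  induction t using TensorProduct.induction_on with
  | zero => simp
  | tmul u y =>
      have : ∀ i : Fin d, ((b.coord i) y • u) ⊗ₜ[k] b i = u ⊗ₜ[k] ((b.repr y i) • b i) := by
        intro i; rw [TensorProduct.tmul_smul, TensorProduct.smul_tmul']; rfl
      simp only [contr_tmul, this]
      rw [← TensorProduct.tmul_sum]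
      congr 1
      exact b.sum_repr y
  | add s t hs ht =>
      simp only [map_add, TensorProduct.add_tmul, Finset.sum_add_distrib, hs, ht]

/-- The matrix coefficient operators of `R`:  `R(m ⊗ b j) = ∑ i, T i j m ⊗ b i`. -/
noncomputable def T (i j : Fin d) : M →ₗ[k] M :=
  contr b i ∘ₗ R ∘ₗ (TensorProduct.mk k M M).flip (b j)

lemma T_apply (i j : Fin d) (m : M) : T b R i j m = contr b i (R (m ⊗ₜ[k] b j)) := rfl

lemma R_apply (m : M) (j : Fin d) :
    R (m ⊗ₜ[k] b j) = ∑ i, T b R i j m ⊗ₜ[k] b i := by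
  simp only [T_apply]
  exact (expand b _).symm

lemma R_apply' (m y : M) :
    R (m ⊗ₜ[k] y) = ∑ j, b.repr y j • R (m ⊗ₜ[k] b j) := by
  conv_lhs => rw [← b.sum_repr y]
  rw [TensorProduct.tmul_sum, map_sum]
  simp [TensorProduct.tmul_smul]


lemma sum3_comm {β : Type*} [AddCommMonoid β] (F : Fin d → Fin d → Fin d → β) :
    ∑ q, ∑ k', ∑ u', F q k' u' = ∑ k', ∑ u', ∑ q, F q k' u' := by
  rw [Finset.sum_comm]
  exact Finset.sum_congr rfl fun _ _ => Finset.sum_comm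

lemma sum4_comm {β : Type*} [AddCommMonoid β] (F : Fin d → Fin d → Fin d → Fin d → β) :
    ∑ a, ∑ b', ∑ c', ∑ e, F a b' c' e = ∑ c', ∑ e, ∑ a, ∑ b', F a b' c' e := by
  calc ∑ a, ∑ b', ∑ c', ∑ e, F a b' c' e
      = ∑ a, ∑ c', ∑ b', ∑ e, F a b' c' e :=
        Finset.sum_congr rfl fun a _ => Finset.sum_comm
    _ = ∑ c', ∑ a, ∑ b', ∑ e, F a b' c' e := Finset.sum_comm
    _ = ∑ c', ∑ a, ∑ e, ∑ b', F a b' c' e :=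
        Finset.sum_congr rfl fun c _ => Finset.sum_congr rfl fun a _ => Finset.sum_comm
    _ = ∑ c', ∑ e, ∑ a, ∑ b', F a b' c' e :=
        Finset.sum_congr rfl fun c _ => Finset.sum_comm

/-- generators -/
abbrev Fr (k : Type u) [Field k] (d : ℕ) : Type (max u v) :=
  FreeAlgebra k (ULift.{v} (Fin d × Fin d))

variable (k) in
noncomputable def c (i j : Fin d) : Fr.{u,v} k d :=
  FreeAlgebra.ι k (ULift.up (i, j))

/-- lhs of relation -/
noncomputable def relL (p i j v' : Fin d) : Fr.{u,v} k d :=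
  ∑ w, b.repr (T b R i j (b v')) w • c k p w

noncomputable def relR (p i j v' : Fin d) : Fr.{u,v} k d :=
  ∑ k', ∑ u', b.repr (T b R i k' (b u')) p • (c k k' j * c k u' v')

inductive Rel : Fr.{u,v} k d → Fr.{u,v} k d → Prop
  | mk (p i j v' : Fin d) : Rel (relL b R p i j v') (relR b R p i j v')

/-- the FRT-type bialgebra -/
abbrev B : Type (max u v) := RingQuot (Rel b R)

noncomputable def pi : Fr.{u,v} k d →ₐ[k] B b R := RingQuot.mkAlgHom k (Rel b R)

noncomputable def cb (i j : Fin d) : B b R := pi b R (c k i j)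

lemma pi_surjective : Function.Surjective (pi b R) := RingQuot.mkAlgHom_surjective k _

lemma hrel (p i j v' : Fin d) :
    ∑ w, b.repr (T b R i j (b v')) w • cb b R p w
      = ∑ k', ∑ u', b.repr (T b R i k' (b u')) p • (cb b R k' j * cb b R u' v') := by
  have := RingQuot.mkAlgHom_rel k (Rel.mk (b := b) (R := R) p i j v')
  simpa [relL, relR, cb, pi, map_sum, map_smul, map_mul] using this

lemma algHom_ext {A : Type*} [Semiring A] [Algebra k A] {f g : B b R →ₐ[k] A}
    (h : ∀ i j, f (cb b R i j) = g (cb b R i j)) : f = g := by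
  apply RingQuot.ringQuot_ext'
  apply FreeAlgebra.hom_ext
  funext z
  obtain ⟨⟨i, j⟩⟩ := z
  exact h i j


noncomputable def deltaF : Fr.{u,v} k d →ₐ[k] (B b R) ⊗[k] (B b R) :=
  FreeAlgebra.lift k fun z => ∑ q, cb b R z.down.1 q ⊗ₜ[k] cb b R q z.down.2

lemma deltaF_c (i j : Fin d) :
    deltaF b R (c k i j) = ∑ q, cb b R i q ⊗ₜ[k] cb b R q j := by
  simp [deltaF, c]


lemma deltaF_rel : ∀ ⦃x y⦄, Rel b R x y → deltaF b R x = deltaF b R y := by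
  rintro _ _ ⟨p, i, j, v'⟩
  have e1 : deltaF b R (relL b R p i j v')
      = ∑ q, ∑ k', ∑ u', b.repr (T b R i k' (b u')) q •
          (cb b R p q ⊗ₜ[k] (cb b R k' j * cb b R u' v')) := by
    rw [relL, map_sum]
    simp only [map_smul, deltaF_c, Finset.smul_sum]
    rw [Finset.sum_comm]
    refine Finset.sum_congr rfl fun q _ => ?_
    calc ∑ w, b.repr (T b R i j (b v')) w • (cb b R p q ⊗ₜ[k] cb b R q w)
        = cb b R p q ⊗ₜ[k] (∑ w, b.repr (T b R i j (b v')) w • cb b R q w) := by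
          rw [TensorProduct.tmul_sum]; simp [TensorProduct.tmul_smul]
      _ = cb b R p q ⊗ₜ[k] (∑ k', ∑ u', b.repr (T b R i k' (b u')) q •
            (cb b R k' j * cb b R u' v')) := by rw [hrel]
      _ = _ := by
          rw [TensorProduct.tmul_sum]
          refine Finset.sum_congr rfl fun k' _ => ?_
          rw [TensorProduct.tmul_sum]; simp [TensorProduct.tmul_smul]
  have e2 : deltaF b R (relR b R p i j v')
      = ∑ k', ∑ u', ∑ q, b.repr (T b R i k' (b u')) q •
          (cb b R p q ⊗ₜ[k] (cb b R k' j * cb b R u' v')) := by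
    have e3 : deltaF b R (relR b R p i j v')
        = ∑ s, ∑ t, ∑ k', ∑ u', b.repr (T b R i s (b t)) p •
            ((cb b R s k' * cb b R t u') ⊗ₜ[k] (cb b R k' j * cb b R u' v')) := by
      rw [relR, map_sum]
      refine Finset.sum_congr rfl fun s _ => ?_
      rw [map_sum]
      refine Finset.sum_congr rfl fun t _ => ?_
      simp only [map_smul, map_mul, deltaF_c]
      rw [Finset.sum_mul_sum, Finset.smul_sum]
      refine Finset.sum_congr rfl fun k' _ => ?_
      rw [Finset.smul_sum]
      refine Finset.sum_congr rfl fun u' _ => ?_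
      rw [Algebra.TensorProduct.tmul_mul_tmul]
    rw [e3, sum4_comm]
    refine Finset.sum_congr rfl fun k' _ => Finset.sum_congr rfl fun u' _ => ?_
    calc ∑ s, ∑ t, b.repr (T b R i s (b t)) p •
            ((cb b R s k' * cb b R t u') ⊗ₜ[k] (cb b R k' j * cb b R u' v'))
        = (∑ s, ∑ t, b.repr (T b R i s (b t)) p • (cb b R s k' * cb b R t u'))
            ⊗ₜ[k] (cb b R k' j * cb b R u' v') := by
          rw [TensorProduct.sum_tmul]
          refine Finset.sum_congr rfl fun s _ => ?_
          rw [TensorProduct.sum_tmul]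
          simp [TensorProduct.smul_tmul']
      _ = (∑ q, b.repr (T b R i k' (b u')) q • cb b R p q)
            ⊗ₜ[k] (cb b R k' j * cb b R u' v') := by rw [hrel]
      _ = _ := by
          rw [TensorProduct.sum_tmul]
          simp [TensorProduct.smul_tmul']
  rw [e1, e2, sum3_comm]

noncomputable def epsF : Fr.{u,v} k d →ₐ[k] k :=
  FreeAlgebra.lift k fun z => if z.down.1 = z.down.2 then (1 : k) else 0

lemma epsF_c (i j : Fin d) : (epsF (k := k) (d := d)) (c k i j) = if i = j then 1 else 0 := by
  simp [epsF, c]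

lemma epsF_rel : ∀ ⦃x y⦄, Rel b R x y → epsF x = epsF y := by
  rintro _ _ ⟨p, i, j, v'⟩
  rw [relL, relR, map_sum, map_sum]
  simp only [map_smul, map_mul, epsF, c, FreeAlgebra.lift_ι_apply, smul_eq_mul, mul_ite,
    mul_one, mul_zero, ite_mul, zero_mul]
  simp [Finset.sum_ite_eq, Finset.sum_ite_eq']

noncomputable def deltaB : B b R →ₐ[k] (B b R) ⊗[k] (B b R) :=
  RingQuot.liftAlgHom k ⟨deltaF b R, deltaF_rel b R⟩

noncomputable def epsB : B b R →ₐ[k] k :=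
  RingQuot.liftAlgHom k ⟨epsF, epsF_rel b R⟩

lemma deltaB_cb (i j : Fin d) :
    deltaB b R (cb b R i j) = ∑ q, cb b R i q ⊗ₜ[k] cb b R q j := by
  rw [cb, pi, deltaB, RingQuot.liftAlgHom_mkAlgHom_apply, deltaF_c]

lemma epsB_cb (i j : Fin d) :
    epsB b R (cb b R i j) = if i = j then 1 else 0 := by
  rw [cb, pi, epsB, RingQuot.liftAlgHom_mkAlgHom_apply, epsF_c]

noncomputable instance : CoalgebraStruct k (B b R) where
  comul := (deltaB b R).toLinearMap
  counit := (epsB b R).toLinearMap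

lemma comul_eq : Coalgebra.comul (R := k) (A := B b R) = (deltaB b R).toLinearMap := rfl
lemma counit_eq : Coalgebra.counit (R := k) (A := B b R) = (epsB b R).toLinearMap := rfl

noncomputable def coassocL : B b R →ₐ[k] B b R ⊗[k] (B b R ⊗[k] B b R) :=
  (Algebra.TensorProduct.assoc k k k (B b R) (B b R) (B b R)).toAlgHom.comp
    ((Algebra.TensorProduct.map (deltaB b R) (AlgHom.id k (B b R))).comp (deltaB b R))

noncomputable def coassocR : B b R →ₐ[k] B b R ⊗[k] (B b R ⊗[k] B b R) :=
  (Algebra.TensorProduct.map (AlgHom.id k (B b R)) (deltaB b R)).comp (deltaB b R)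

lemma coassoc_alg : coassocL b R = coassocR b R := by
  apply algHom_ext
  intro i j
  simp only [coassocL, coassocR, AlgHom.comp_apply, deltaB_cb, map_sum,
    Algebra.TensorProduct.map_tmul, AlgHom.id_apply, AlgEquiv.toAlgHom_eq_coe,
    AlgHom.coe_coe, TensorProduct.sum_tmul, Algebra.TensorProduct.assoc_tmul,
    TensorProduct.tmul_sum]
  exact Finset.sum_comm

lemma coassoc_ptL (y : B b R ⊗[k] B b R) :
    (TensorProduct.assoc k (B b R) (B b R) (B b R))
        (LinearMap.rTensor (B b R) (deltaB b R).toLinearMap y)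
      = (Algebra.TensorProduct.assoc k k k (B b R) (B b R) (B b R))
        ((Algebra.TensorProduct.map (deltaB b R) (AlgHom.id k (B b R))) y) := by
  induction y using TensorProduct.induction_on with
  | zero => simp
  | tmul x z =>
      simp only [LinearMap.rTensor_tmul, AlgHom.toLinearMap_apply,
        Algebra.TensorProduct.map_tmul, AlgHom.id_apply]
      induction (deltaB b R x) using TensorProduct.induction_on with
      | zero => simp
      | tmul a c => simp [Algebra.TensorProduct.assoc_tmul]
      | add p q hp hq => simp [TensorProduct.add_tmul, hp, hq]
  | add x z hx hz => simp [hx, hz]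

lemma coassoc_ptR (y : B b R ⊗[k] B b R) :
    LinearMap.lTensor (B b R) (deltaB b R).toLinearMap y
      = (Algebra.TensorProduct.map (AlgHom.id k (B b R)) (deltaB b R)) y := by
  induction y using TensorProduct.induction_on with
  | zero => simp
  | tmul x z => simp
  | add x z hx hz => simp [hx, hz]

lemma counit_ptR (y : B b R ⊗[k] B b R) :
    LinearMap.rTensor (B b R) (epsB b R).toLinearMap y
      = (Algebra.TensorProduct.map (epsB b R) (AlgHom.id k (B b R))) y := by
  induction y using TensorProduct.induction_on with
  | zero => simp
  | tmul x z => simp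
  | add x z hx hz => simp [hx, hz]

lemma counit_ptL (y : B b R ⊗[k] B b R) :
    LinearMap.lTensor (B b R) (epsB b R).toLinearMap y
      = (Algebra.TensorProduct.map (AlgHom.id k (B b R)) (epsB b R)) y := by
  induction y using TensorProduct.induction_on with
  | zero => simp
  | tmul x z => simp
  | add x z hx hz => simp [hx, hz]

lemma counit_algR :
    (Algebra.TensorProduct.map (epsB b R) (AlgHom.id k (B b R))).comp (deltaB b R)
      = Algebra.TensorProduct.includeRight := by
  apply algHom_ext
  intro i j
  simp only [AlgHom.comp_apply, deltaB_cb, map_sum, Algebra.TensorProduct.map_tmul,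
    AlgHom.id_apply, epsB_cb, Algebra.TensorProduct.includeRight_apply]
  simp [TensorProduct.ite_tmul, Finset.sum_ite_eq]

lemma counit_algL :
    (Algebra.TensorProduct.map (AlgHom.id k (B b R)) (epsB b R)).comp (deltaB b R)
      = Algebra.TensorProduct.includeLeft := by
  apply algHom_ext
  intro i j
  simp only [AlgHom.comp_apply, deltaB_cb, map_sum, Algebra.TensorProduct.map_tmul,
    AlgHom.id_apply, epsB_cb, Algebra.TensorProduct.includeLeft_apply]
  simp [TensorProduct.tmul_ite, Finset.sum_ite_eq']

noncomputable instance : Coalgebra k (B b R) where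
  coassoc := by
    apply LinearMap.ext
    intro a
    have h := AlgHom.congr_fun (coassoc_alg b R) a
    simp only [coassocL, coassocR, AlgHom.comp_apply, AlgEquiv.toAlgHom_eq_coe,
      AlgHom.coe_coe] at h
    simp only [LinearMap.coe_comp, Function.comp_apply, LinearEquiv.coe_coe, comul_eq,
      AlgHom.toLinearMap_apply]
    rw [coassoc_ptL, coassoc_ptR]
    exact h
  rTensor_counit_comp_comul := by
    apply LinearMap.ext
    intro a
    have h := AlgHom.congr_fun (counit_algR b R) a
    simp only [AlgHom.comp_apply, Algebra.TensorProduct.includeRight_apply] at h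
    simp only [LinearMap.coe_comp, Function.comp_apply, comul_eq, counit_eq,
      AlgHom.toLinearMap_apply]
    rw [counit_ptR]
    exact h
  lTensor_counit_comp_comul := by
    apply LinearMap.ext
    intro a
    have h := AlgHom.congr_fun (counit_algL b R) a
    simp only [AlgHom.comp_apply, Algebra.TensorProduct.includeLeft_apply] at h
    simp only [LinearMap.coe_comp, Function.comp_apply, comul_eq, counit_eq,
      AlgHom.toLinearMap_apply]
    rw [counit_ptL]
    exact h

noncomputable instance : Bialgebra k (B b R) :=
  Bialgebra.mk' k (B b R) (map_one (epsB b R)) (fun {a b'} => map_mul (epsB b R) a b')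
    (map_one (deltaB b R)) (fun {a b'} => map_mul (deltaB b R) a b')

lemma map23_tmul (a y z : M) :
    map23 R (a ⊗ₜ[k] (y ⊗ₜ[k] z)) = a ⊗ₜ[k] R (y ⊗ₜ[k] z) := by
  simp [map23]

lemma map12_tmul (a y z : M) :
    map12 R (a ⊗ₜ[k] (y ⊗ₜ[k] z))
      = (TensorProduct.assoc k M M M) (R (a ⊗ₜ[k] y) ⊗ₜ[k] z) := by
  simp [map12]

lemma lT_flip (a y z : M) :
    (flipMap k M).lTensor M (a ⊗ₜ[k] (y ⊗ₜ[k] z)) = a ⊗ₜ[k] (z ⊗ₜ[k] y) := by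
  simp [flipMap]

lemma coord_basis (p p' : Fin d) : b.coord p (b p') = if p' = p then 1 else 0 := by
  simp [Module.Basis.coord_apply, Finsupp.single_apply]

noncomputable def E (p i : Fin d) : M ⊗[k] (M ⊗[k] M) →ₗ[k] M :=
  (TensorProduct.rid k M).toLinearMap ∘ₗ
    LinearMap.lTensor M ((TensorProduct.lid k k).toLinearMap ∘ₗ
      TensorProduct.map (b.coord p) (b.coord i))

lemma E_tmul (p i : Fin d) (a y z : M) :
    E b p i (a ⊗ₜ[k] (y ⊗ₜ[k] z)) = (b.coord p y * b.coord i z) • a := by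
  simp [E, TensorProduct.lid_tmul, TensorProduct.smul_tmul', mul_smul, mul_comm]

lemma E_canonical (A : Fin d → Fin d → M) (p i : Fin d) :
    E b p i (∑ p', ∑ i', A p' i' ⊗ₜ[k] (b p' ⊗ₜ[k] b i')) = A p i := by
  rw [map_sum]
  rw [Finset.sum_eq_single p]
  · rw [map_sum, Finset.sum_eq_single i]
    · simp [E_tmul, coord_basis]
    · intro i' _ hne
      simp [E_tmul, coord_basis, hne]
    · simp
  · intro p' _ hne
    rw [map_sum]
    apply Finset.sum_eq_zero
    intro i' _
    simp [E_tmul, coord_basis, hne]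
  · simp

lemma lhs_eval (m : M) (v' j : Fin d) :
    map12 R (map23 R (m ⊗ₜ[k] (b v' ⊗ₜ[k] b j)))
      = ∑ p, ∑ i, (∑ w, b.repr (T b R i j (b v')) w • T b R p w m) ⊗ₜ[k]
          (b p ⊗ₜ[k] b i) := by
  rw [map23_tmul, R_apply b R (b v') j, TensorProduct.tmul_sum, map_sum]
  calc ∑ i, map12 R (m ⊗ₜ[k] (T b R i j (b v') ⊗ₜ[k] b i))
      = ∑ i, ∑ w, ∑ p, b.repr (T b R i j (b v')) w •
          (T b R p w m ⊗ₜ[k] (b p ⊗ₜ[k] b i)) := by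
        refine Finset.sum_congr rfl fun i _ => ?_
        rw [map12_tmul, R_apply' b R m (T b R i j (b v')), TensorProduct.sum_tmul, map_sum]
        refine Finset.sum_congr rfl fun w _ => ?_
        rw [← TensorProduct.smul_tmul', map_smul, R_apply, TensorProduct.sum_tmul, map_sum,
          Finset.smul_sum]
        refine Finset.sum_congr rfl fun p _ => ?_
        rw [TensorProduct.assoc_tmul]
    _ = ∑ p, ∑ i, ∑ w, b.repr (T b R i j (b v')) w •
          (T b R p w m ⊗ₜ[k] (b p ⊗ₜ[k] b i)) := by rw [sum3_comm, sum3_comm]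
    _ = _ := by
        refine Finset.sum_congr rfl fun p _ => Finset.sum_congr rfl fun i _ => ?_
        rw [TensorProduct.sum_tmul]
        exact Finset.sum_congr rfl fun w _ => (TensorProduct.smul_tmul' _ _ _).symm

lemma rhs_eval (m : M) (v' j : Fin d) :
    map23 R (map13 R (map12 R (m ⊗ₜ[k] (b v' ⊗ₜ[k] b j))))
      = ∑ p, ∑ i, (∑ k', ∑ u', b.repr (T b R i k' (b u')) p •
          T b R k' j (T b R u' v' m)) ⊗ₜ[k] (b p ⊗ₜ[k] b i) := by
  have h1 : map12 R (m ⊗ₜ[k] (b v' ⊗ₜ[k] b j))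
      = ∑ u', T b R u' v' m ⊗ₜ[k] (b u' ⊗ₜ[k] b j) := by
    rw [map12_tmul, R_apply, TensorProduct.sum_tmul, map_sum]
    exact Finset.sum_congr rfl fun u' _ => TensorProduct.assoc_tmul _ _ _
  have h2 : map13 R (map12 R (m ⊗ₜ[k] (b v' ⊗ₜ[k] b j)))
      = ∑ u', ∑ k', T b R k' j (T b R u' v' m) ⊗ₜ[k] (b u' ⊗ₜ[k] b k') := by
    rw [h1, map_sum]
    refine Finset.sum_congr rfl fun u' _ => ?_
    simp only [map13, LinearMap.comp_apply]
    rw [lT_flip, map12_tmul, R_apply, TensorProduct.sum_tmul, map_sum, map_sum]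
    refine Finset.sum_congr rfl fun k' _ => ?_
    rw [TensorProduct.assoc_tmul, lT_flip]
  rw [h2, map_sum]
  calc ∑ u', map23 R (∑ k', T b R k' j (T b R u' v' m) ⊗ₜ[k] (b u' ⊗ₜ[k] b k'))
      = ∑ u', ∑ k', ∑ i, ∑ p, b.repr (T b R i k' (b u')) p •
          (T b R k' j (T b R u' v' m) ⊗ₜ[k] (b p ⊗ₜ[k] b i)) := by
        refine Finset.sum_congr rfl fun u' _ => ?_
        rw [map_sum]
        refine Finset.sum_congr rfl fun k' _ => ?_
        rw [map23_tmul, R_apply, TensorProduct.tmul_sum]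
        refine Finset.sum_congr rfl fun i _ => ?_
        conv_lhs => rw [← b.sum_repr (T b R i k' (b u'))]
        rw [TensorProduct.sum_tmul, TensorProduct.tmul_sum]
        exact Finset.sum_congr rfl fun p _ => by
          rw [← TensorProduct.smul_tmul', TensorProduct.tmul_smul]
    _ = ∑ i, ∑ p, ∑ u', ∑ k', b.repr (T b R i k' (b u')) p •
          (T b R k' j (T b R u' v' m) ⊗ₜ[k] (b p ⊗ₜ[k] b i)) := sum4_comm _
    _ = ∑ p, ∑ i, ∑ u', ∑ k', b.repr (T b R i k' (b u')) p •
          (T b R k' j (T b R u' v' m) ⊗ₜ[k] (b p ⊗ₜ[k] b i)) := Finset.sum_comm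
    _ = ∑ p, ∑ i, ∑ k', ∑ u', b.repr (T b R i k' (b u')) p •
          (T b R k' j (T b R u' v' m) ⊗ₜ[k] (b p ⊗ₜ[k] b i)) :=
        Finset.sum_congr rfl fun p _ => Finset.sum_congr rfl fun i _ => Finset.sum_comm
    _ = _ := by
        refine Finset.sum_congr rfl fun p _ => Finset.sum_congr rfl fun i _ => ?_
        rw [TensorProduct.sum_tmul]
        refine Finset.sum_congr rfl fun k' _ => ?_
        rw [TensorProduct.sum_tmul]
        exact Finset.sum_congr rfl fun u' _ => (TensorProduct.smul_tmul' _ _ _).symm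

lemma hopf_component (hR : IsHopfSolution R) (p i j v' : Fin d) (m : M) :
    ∑ w, b.repr (T b R i j (b v')) w • T b R p w m
      = ∑ k', ∑ u', b.repr (T b R i k' (b u')) p • T b R k' j (T b R u' v' m) := by
  have h := LinearMap.congr_fun hR (m ⊗ₜ[k] (b v' ⊗ₜ[k] b j))
  simp only [LinearMap.comp_apply] at h
  rw [lhs_eval, rhs_eval] at h
  have := congrArg (E b p i) h
  rwa [E_canonical, E_canonical] at this

noncomputable def phiF : Fr.{u,v} k d →ₐ[k] Module.End k M :=
  FreeAlgebra.lift k fun z => T b R z.down.1 z.down.2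

lemma phiF_c (i j : Fin d) : phiF b R (c k i j) = T b R i j := by simp [phiF, c]

lemma phiF_rel (hR : IsHopfSolution R) :
    ∀ ⦃x y⦄, Rel b R x y → phiF b R x = phiF b R y := by
  rintro _ _ ⟨p, i, j, v'⟩
  rw [relL, relR]
  simp only [map_sum, map_smul, map_mul, phiF_c]
  apply LinearMap.ext
  intro m
  have h := hopf_component b R hR p i j v' m
  simpa only [LinearMap.coe_sum, Finset.sum_apply, LinearMap.smul_apply,
    Module.End.mul_apply] using h

noncomputable def phiB (hR : IsHopfSolution R) : B b R →ₐ[k] Module.End k M :=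
  RingQuot.liftAlgHom k ⟨phiF b R, phiF_rel b R hR⟩

lemma phiB_cb (hR : IsHopfSolution R) (i j : Fin d) :
    phiB b R hR (cb b R i j) = T b R i j := by
  rw [cb, pi, phiB, RingQuot.liftAlgHom_mkAlgHom_apply, phiF_c]

noncomputable def act (hR : IsHopfSolution R) : B b R ⊗[k] M →ₗ[k] M :=
  TensorProduct.lift (phiB b R hR).toLinearMap

lemma act_tmul (hR : IsHopfSolution R) (x : B b R) (m : M) :
    act b R hR (x ⊗ₜ[k] m) = phiB b R hR x m := rfl

noncomputable def coact : M →ₗ[k] M ⊗[k] B b R :=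
  ∑ i, ∑ j, (b.coord j).smulRight (b i ⊗ₜ[k] cb b R i j)

lemma coact_apply (m : M) :
    coact b R m = ∑ i, ∑ j, b.repr m j • (b i ⊗ₜ[k] cb b R i j) := by
  simp [coact, Module.Basis.coord_apply]

lemma coact_basis (v' : Fin d) :
    coact b R (b v') = ∑ i, b i ⊗ₜ[k] cb b R i v' := by
  rw [coact_apply]
  refine Finset.sum_congr rfl fun i _ => ?_
  rw [Finset.sum_eq_single v']
  · simp
  · intro j _ hne
    simp [Module.Basis.repr_self, Finsupp.single_apply, Ne.symm hne]
  · simp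

lemma act_one_prop (hR : IsHopfSolution R) (m : M) :
    act b R hR ((1 : B b R) ⊗ₜ[k] m) = m := by
  rw [act_tmul, map_one]
  rfl

lemma act_mul_prop (hR : IsHopfSolution R) (x y : B b R) (m : M) :
    act b R hR ((x * y) ⊗ₜ[k] m) = act b R hR (x ⊗ₜ[k] act b R hR (y ⊗ₜ[k] m)) := by
  rw [act_tmul, act_tmul, act_tmul, map_mul]
  rfl

lemma coassoc_prop :
    (TensorProduct.assoc k M (B b R) (B b R)).toLinearMap ∘ₗ
        (coact b R).rTensor (B b R) ∘ₗ coact b R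
      = (Coalgebra.comul (R := k)).lTensor M ∘ₗ coact b R := by
  apply b.ext
  intro v'
  simp only [LinearMap.comp_apply, coact_basis, map_sum, LinearMap.rTensor_tmul,
    LinearMap.lTensor_tmul, comul_eq, AlgHom.toLinearMap_apply, deltaB_cb,
    LinearEquiv.coe_coe, TensorProduct.sum_tmul, TensorProduct.assoc_tmul,
    TensorProduct.tmul_sum]
  exact Finset.sum_comm

lemma counit_prop :
    (TensorProduct.rid k M).toLinearMap ∘ₗ
        (Coalgebra.counit (R := k)).lTensor M ∘ₗ coact b R = LinearMap.id := by
  apply b.ext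
  intro v'
  simp only [LinearMap.comp_apply, coact_basis, map_sum, LinearMap.lTensor_tmul,
    counit_eq, AlgHom.toLinearMap_apply, epsB_cb, LinearEquiv.coe_coe, LinearMap.id_apply,
    TensorProduct.rid_tmul]
  rw [Finset.sum_eq_single v'] <;>
    simp +contextual [TensorProduct.tmul_ite]

noncomputable def W (hR : IsHopfSolution R) :
    (B b R ⊗[k] B b R) ⊗[k] (M ⊗[k] B b R) →ₗ[k] M ⊗[k] B b R :=
  TensorProduct.map (act b R hR) (LinearMap.mul' k (B b R)) ∘ₗ
    (TensorProduct.tensorTensorTensorComm k (B b R) (B b R) M (B b R)).toLinearMap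

lemma W_tmul (hR : IsHopfSolution R) (a1 a2 : B b R) (m : M) (c' : B b R) :
    W b R hR ((a1 ⊗ₜ[k] a2) ⊗ₜ[k] (m ⊗ₜ[k] c'))
      = act b R hR (a1 ⊗ₜ[k] m) ⊗ₜ[k] (a2 * c') := by
  simp [W, TensorProduct.tensorTensorTensorComm_tmul, LinearMap.mul'_apply]

lemma W_one (hR : IsHopfSolution R) (t : M ⊗[k] B b R) :
    W b R hR (((1 : B b R) ⊗ₜ[k] (1 : B b R)) ⊗ₜ[k] t) = t := by
  induction t using TensorProduct.induction_on with
  | zero => simp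
  | tmul m c' => rw [W_tmul, act_one_prop, one_mul]
  | add s t hs ht => rw [TensorProduct.tmul_add, map_add, hs, ht]

lemma W_key (hR : IsHopfSolution R) (X Y : B b R ⊗[k] B b R) (t : M ⊗[k] B b R) :
    W b R hR (X ⊗ₜ[k] W b R hR (Y ⊗ₜ[k] t)) = W b R hR ((X * Y) ⊗ₜ[k] t) := by
  induction X using TensorProduct.induction_on with
  | zero => simp [TensorProduct.zero_tmul]
  | add X1 X2 h1 h2 =>
      rw [TensorProduct.add_tmul, map_add, add_mul, TensorProduct.add_tmul, map_add, h1, h2]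
  | tmul a1 a2 =>
    induction Y using TensorProduct.induction_on with
    | zero => simp [TensorProduct.zero_tmul, TensorProduct.tmul_zero]
    | add Y1 Y2 h1 h2 =>
        rw [TensorProduct.add_tmul, map_add, TensorProduct.tmul_add, map_add, mul_add,
          TensorProduct.add_tmul, map_add, h1, h2]
    | tmul b1 b2 =>
      induction t using TensorProduct.induction_on with
      | zero => simp [TensorProduct.tmul_zero]
      | add t1 t2 h1 h2 =>
          rw [TensorProduct.tmul_add, map_add, TensorProduct.tmul_add, map_add,
            TensorProduct.tmul_add, map_add, h1, h2]
      | tmul m c' =>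
          rw [W_tmul, W_tmul, Algebra.TensorProduct.tmul_mul_tmul, W_tmul,
            ← act_mul_prop, mul_assoc]

lemma compat_gen (hR : IsHopfSolution R) (i j : Fin d) (m : M) :
    coact b R (act b R hR (cb b R i j ⊗ₜ[k] m))
      = W b R hR (deltaB b R (cb b R i j) ⊗ₜ[k] coact b R m) := by
  have hL : coact b R ∘ₗ act b R hR ∘ₗ (TensorProduct.mk k (B b R) M) (cb b R i j)
      = W b R hR ∘ₗ
          (TensorProduct.mk k (B b R ⊗[k] B b R) (M ⊗[k] B b R))
            (deltaB b R (cb b R i j)) ∘ₗ coact b R := by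
    apply b.ext
    intro v'
    simp only [LinearMap.comp_apply, TensorProduct.mk_apply]
    rw [act_tmul, phiB_cb, coact_apply, coact_basis, deltaB_cb]
    calc ∑ p, ∑ w, b.repr (T b R i j (b v')) w • (b p ⊗ₜ[k] cb b R p w)
        = ∑ p, ∑ q, ∑ u', b.repr (T b R i q (b u')) p •
            (b p ⊗ₜ[k] (cb b R q j * cb b R u' v')) := by
          refine Finset.sum_congr rfl fun p _ => ?_
          calc ∑ w, b.repr (T b R i j (b v')) w • (b p ⊗ₜ[k] cb b R p w)
              = b p ⊗ₜ[k] ∑ w, b.repr (T b R i j (b v')) w • cb b R p w := by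
                rw [TensorProduct.tmul_sum]
                exact Finset.sum_congr rfl fun w _ => (TensorProduct.tmul_smul _ _ _).symm
            _ = b p ⊗ₜ[k] ∑ q, ∑ u', b.repr (T b R i q (b u')) p •
                  (cb b R q j * cb b R u' v') := by rw [hrel]
            _ = _ := by
                rw [TensorProduct.tmul_sum]
                refine Finset.sum_congr rfl fun q _ => ?_
                rw [TensorProduct.tmul_sum]
                exact Finset.sum_congr rfl fun u' _ => TensorProduct.tmul_smul _ _ _
      _ = ∑ q, ∑ u', ∑ p, b.repr (T b R i q (b u')) p •
            (b p ⊗ₜ[k] (cb b R q j * cb b R u' v')) := sum3_comm _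
      _ = _ := by
          rw [TensorProduct.sum_tmul, map_sum]
          refine Finset.sum_congr rfl fun q _ => ?_
          rw [TensorProduct.tmul_sum, map_sum]
          refine Finset.sum_congr rfl fun u' _ => ?_
          rw [W_tmul, act_tmul, phiB_cb]
          conv_rhs => rw [← b.sum_repr (T b R i q (b u'))]
          rw [TensorProduct.sum_tmul]
          exact Finset.sum_congr rfl fun p _ => TensorProduct.smul_tmul' _ _ _
  exact LinearMap.congr_fun hL m

lemma compat_all (hR : IsHopfSolution R) (x : B b R) (m : M) :
    coact b R (act b R hR (x ⊗ₜ[k] m))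
      = W b R hR (deltaB b R x ⊗ₜ[k] coact b R m) := by
  obtain ⟨f, rfl⟩ := pi_surjective b R x
  induction f using FreeAlgebra.induction generalizing m with
  | grade0 r =>
      rw [AlgHom.commutes]
      have h1 : (algebraMap k (B b R) r) ⊗ₜ[k] m = r • ((1 : B b R) ⊗ₜ[k] m) := by
        rw [Algebra.algebraMap_eq_smul_one, TensorProduct.smul_tmul']
      have h2 : deltaB b R (algebraMap k (B b R) r)
          = r • ((1 : B b R) ⊗ₜ[k] (1 : B b R)) := by
        rw [AlgHom.commutes, Algebra.algebraMap_eq_smul_one,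
          Algebra.TensorProduct.one_def]
      rw [h1, map_smul, map_smul, h2, ← TensorProduct.smul_tmul', map_smul,
        act_one_prop, W_one]
  | grade1 z =>
      obtain ⟨⟨i, j⟩⟩ := z
      exact compat_gen b R hR i j m
  | mul f g hf hg =>
      rw [map_mul, act_mul_prop, hf, hg, W_key, ← map_mul]
  | add f g hf hg =>
      simp only [map_add, TensorProduct.add_tmul, hf, hg]

lemma compat_prop (hR : IsHopfSolution R) :
    coact b R ∘ₗ act b R hR
      = TensorProduct.map (act b R hR) (LinearMap.mul' k (B b R)) ∘ₗ
          (TensorProduct.tensorTensorTensorComm k (B b R) (B b R) M (B b R)).toLinearMap ∘ₗ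
          TensorProduct.map (Coalgebra.comul (R := k)) (coact b R) := by
  apply TensorProduct.ext'
  intro x m
  have h := compat_all b R hR x m
  simpa only [LinearMap.comp_apply, TensorProduct.map_tmul, comul_eq,
    AlgHom.toLinearMap_apply, W, LinearMap.coe_comp, Function.comp_apply,
    LinearEquiv.coe_coe] using h

lemma rmap_comp (hR : IsHopfSolution R) (m n : M) :
    (act b R hR).rTensor M
      (((TensorProduct.comm k M (B b R)).toLinearMap.rTensor M)
        ((TensorProduct.assoc k M (B b R) M).symm.toLinearMap
          (((TensorProduct.comm k M (B b R)).toLinearMap.lTensor M)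
            ((coact b R).lTensor M (m ⊗ₜ[k] n))))) = R (m ⊗ₜ[k] n) := by
  rw [LinearMap.lTensor_tmul, coact_apply, R_apply' b R m n]
  simp only [TensorProduct.tmul_sum, TensorProduct.tmul_smul, map_sum, map_smul,
    LinearMap.lTensor_tmul, LinearMap.rTensor_tmul, LinearEquiv.coe_coe,
    TensorProduct.comm_tmul, TensorProduct.assoc_symm_tmul, act_tmul, phiB_cb, R_apply]
  rw [Finset.sum_comm]
  refine Finset.sum_congr rfl fun t _ => ?_
  rw [Finset.smul_sum]

end FRTaux


/-- FRT type theorem: if `M` is finite dimensional and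
`R ∈ End(M ⊗ M)` is a solution of the Hopf equation, then there is a bialgebra `B` and a
`B`-Hopf module structure `(M, ·, ρ)` on `M` such that `R(m ⊗ n) = Σ n₍₁₎·m ⊗ n₍₀₎`. -/
theorem exists_hopfModuleData_of_isHopfSolution (k : Type u) [Field k] (M : Type v)
    [AddCommGroup M] [Module k M] [FiniteDimensional k M]
    (R : M ⊗[k] M →ₗ[k] M ⊗[k] M) (hR : IsHopfSolution R) :
    ∃ D : HopfModuleData k M, R = D.Rmap := by
  classical
  set b : Module.Basis (Fin (Module.finrank k M)) k M := Module.finBasis k M with hb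
  refine ⟨{ B := FRTaux.B b R
            act := FRTaux.act b R hR
            coact := FRTaux.coact b R
            act_one := FRTaux.act_one_prop b R hR
            act_mul := FRTaux.act_mul_prop b R hR
            coassoc := FRTaux.coassoc_prop b R
            counit := FRTaux.counit_prop b R
            compat := FRTaux.compat_prop b R hR }, ?_⟩
  apply TensorProduct.ext'
  intro m n
  rw [HopfModuleData.Rmap]
  simp only [LinearMap.comp_apply]
  exact (FRTaux.rmap_comp b R hR m n).symm
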